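/- Let w be a group-word and G a group such that the set G_w of w-values is finite with |G_w| = m. Then the centralizer C = C_G(G_w) of all w-values has index at most m! in G, and C ∩ w(G) is an abelian subgroup of index at most m! in w(G); in particular, w(G) contains an abelian subgroup of finite index. -/

import Mathlib

/-!
Conjugation permutes the `m` elements of `G_w`, and `C_G(G_w)` is the kernel of the resulting
homomorphism `G → Sym(G_w)`, so its index divides `m!`. An element of `C_G(G_w)` commutes with
every generator of `w(G)`, hence with `w(G)`, which makes `C_G(G_w) ∩ w(G)` abelian; its index in
`w(G)` is at most that of `C_G(G_w)` in `G`.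
-/

open scoped commutatorElement

/-- The set of `w`-values in `G`: all images of the word `w` under
evaluations of the variables in `G`. -/
def wValues (w : FreeGroup ℕ) (G : Type*) [Group G] : Set G :=
  {g | ∃ f : ℕ → G, FreeGroup.lift f w = g}

/-- The verbal subgroup of `G` determined by the word `w`: the subgroup
generated by the set of `w`-values. -/
def verbalSubgroup (w : FreeGroup ℕ) (G : Type*) [Group G] : Subgroup G :=
  Subgroup.closure (wValues w G)

/-- `IsMCWOn w S` : `w` is a multilinear (outer) commutator word whose set of
variables is exactly `S`.  Every variable is such a word, and the commutator of
two multilinear commutator words in disjoint sets of variables is again one. -/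
inductive IsMCWOn : FreeGroup ℕ → Set ℕ → Prop
  | var (i : ℕ) : IsMCWOn (FreeGroup.of i) {i}
  | comm {w₁ w₂ : FreeGroup ℕ} {S₁ S₂ : Set ℕ} :
      IsMCWOn w₁ S₁ → IsMCWOn w₂ S₂ → Disjoint S₁ S₂ → IsMCWOn ⁅w₁, w₂⁆ (S₁ ∪ S₂)

/-- A multilinear commutator word (outer commutator word). -/
def IsMultilinearCommutatorWord (w : FreeGroup ℕ) : Prop := ∃ S, IsMCWOn w S

/-- `N` is a `w`-subgroup of `G`: `N` is generated by cyclic subgroups `⟨x⟩`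
contained in the set of `w`-values of `G`. -/
def IsWSubgroup (w : FreeGroup ℕ) {G : Type*} [Group G] (N : Subgroup G) : Prop :=
  ∃ X : Set G, (∀ x ∈ X, ∀ i : ℤ, x ^ i ∈ wValues w G) ∧ Subgroup.closure X = N

/-- A group is residually finite if every nontrivial element lies outside some
normal subgroup of finite index. -/
def ResiduallyFinite (G : Type*) [Group G] : Prop :=
  ∀ g : G, g ≠ 1 → ∃ N : Subgroup G, N.Normal ∧ N.FiniteIndex ∧ g ∉ N

/-- The lower central word `γ_k`: `γ_1 = x_1` and `γ_k = [γ_{k-1}, x_k]`. -/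
def gammaWord : ℕ → FreeGroup ℕ
  | 0 => 1
  | 1 => FreeGroup.of 0
  | (k + 2) => ⁅gammaWord (k + 1), FreeGroup.of (k + 1)⁆

/-- The image of `M` in `G ⧸ N` is an abelian `w`-subgroup of `G ⧸ N`. -/
def IsAbelianWSubgroupInQuotient (w : FreeGroup ℕ) {G : Type*} [Group G] (N M : Subgroup G)
    (hN : N.Normal) : Prop :=
  haveI := hN
  IsMulCommutative ↥(M.map (QuotientGroup.mk' N)) ∧ IsWSubgroup w (M.map (QuotientGroup.mk' N))

/-- The image of `M` in `G ⧸ N` is abelian and is a `w`-subgroup of `G ⧸ N` for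
every multilinear commutator word `w`. -/
def IsAbelianWSubgroupInQuotientForAllWords {G : Type*} [Group G] (N M : Subgroup G)
    (hN : N.Normal) : Prop :=
  haveI := hN
  IsMulCommutative ↥(M.map (QuotientGroup.mk' N)) ∧
    ∀ w : FreeGroup ℕ, IsMultilinearCommutatorWord w →
      IsWSubgroup w (M.map (QuotientGroup.mk' N))

theorem map_mem_wValues {w : FreeGroup ℕ} {G H : Type*} [Group G] [Group H] (φ : G →* H)
    {x : G} (hx : x ∈ wValues w G) : φ x ∈ wValues w H := by
  obtain ⟨f, rfl⟩ := hx
  exact ⟨φ ∘ f, (FreeGroup.lift_unique (φ.comp (FreeGroup.lift f)) (by simp)).symm⟩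

theorem conj_mem_wValues {w : FreeGroup ℕ} {G : Type*} [Group G] (g : G) {x : G}
    (hx : x ∈ wValues w G) : g * x * g⁻¹ ∈ wValues w G :=
  map_mem_wValues (MulAut.conj g).toMonoidHom hx

namespace Subgroup

variable {G : Type*} [Group G] {S : Set G}

def conjPerm (hS : ∀ g : G, ∀ x ∈ S, g * x * g⁻¹ ∈ S) : G →* Equiv.Perm S where
  toFun g := Equiv.Perm.subtypePerm (MulAut.conj g).toEquiv fun x =>
    ⟨fun hx => by simpa [mul_assoc] using hS g⁻¹ _ hx, hS g x⟩
  map_one' := by ext; simp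
  map_mul' g h := by
    ext x
    change g * h * x * (g * h)⁻¹ = g * (h * x * h⁻¹) * g⁻¹
    group

theorem ker_conjPerm (hS : ∀ g : G, ∀ x ∈ S, g * x * g⁻¹ ∈ S) :
    (conjPerm hS).ker = centralizer S := by
  ext g
  simp only [MonoidHom.mem_ker, Equiv.Perm.ext_iff, Subtype.ext_iff, mem_centralizer_iff,
    Subtype.forall]
  refine forall₂_congr fun x _ => ?_
  simpa [conjPerm, mul_inv_eq_iff_eq_mul] using eq_comm

theorem index_centralizer_dvd_factorial [Finite S] (hS : ∀ g : G, ∀ x ∈ S, g * x * g⁻¹ ∈ S) :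
    (centralizer S).index ∣ (Nat.card S).factorial := by
  rw [← ker_conjPerm hS, index_ker, ← Nat.card_perm]
  exact card_subgroup_dvd_card _

theorem isMulCommutative_centralizer_inf_closure (S : Set G) :
    IsMulCommutative ↥(centralizer S ⊓ closure S) := by
  rw [← le_centralizer_iff_isMulCommutative]
  calc centralizer S ⊓ closure S ≤ closure S := inf_le_right
    _ ≤ centralizer (centralizer S) := closure_le_centralizer_centralizer S
    _ ≤ centralizer (centralizer S ⊓ closure S) := centralizer_le inf_le_left

end Subgroup

/-- If `G` has exactly `m` `w`-values, then the centralizer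
`C = C_G(G_w)` has index at most `m!` in `G`, and `C ⊓ w(G)` is an abelian subgroup
of index at most `m!` in `w(G)`; in particular `w(G)` contains an abelian subgroup
of finite index. -/
theorem centralizer_of_word_values
    (w : FreeGroup ℕ) (G : Type*) [Group G] (m : ℕ)
    (hfin : (wValues w G).Finite) (hm : (wValues w G).ncard = m) :
    (Subgroup.centralizer (wValues w G)).index ≤ m.factorial ∧
    IsMulCommutative ↥(Subgroup.centralizer (wValues w G) ⊓ verbalSubgroup w G) ∧
    (Subgroup.centralizer (wValues w G) ⊓ verbalSubgroup w G).relIndex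
        (verbalSubgroup w G) ≤ m.factorial ∧
    ∃ H : Subgroup G, H ≤ verbalSubgroup w G ∧ IsMulCommutative ↥H ∧
      H.relIndex (verbalSubgroup w G) ≠ 0 := by
  set C := Subgroup.centralizer (wValues w G)
  have hdvd : C.index ∣ m.factorial := by
    have := hfin.to_subtype
    rw [← hm, ← Nat.card_coe_set_eq]
    exact Subgroup.index_centralizer_dvd_factorial fun g _ => conj_mem_wValues g
  have hC : C.index ≠ 0 := ne_zero_of_dvd_ne_zero m.factorial_ne_zero hdvd
  have hC_le : C.index ≤ m.factorial := Nat.le_of_dvd m.factorial_pos hdvd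
  have hrel_le : C.relIndex (verbalSubgroup w G) ≤ C.index :=
    C.relIndex_top_right ▸ Subgroup.relIndex_le_of_le_right le_top (C.relIndex_top_right ▸ hC)
  have hrel_ne : C.relIndex (verbalSubgroup w G) ≠ 0 :=
    mt (Subgroup.relIndex_eq_zero_of_le_right le_top) (C.relIndex_top_right ▸ hC)
  have hcomm := Subgroup.isMulCommutative_centralizer_inf_closure (wValues w G)
  rw [Subgroup.inf_relIndex_right]
  exact ⟨hC_le, hcomm, hrel_le.trans hC_le, C ⊓ verbalSubgroup w G, inf_le_right, hcomm,
    by rwa [Subgroup.inf_relIndex_right]⟩
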